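/- arXiv:2408.11375 — 3 statements merged into one kernel-verified Lean document; each statement's English description precedes it below -/
import Mathlib

section
/- Let G be a connected finite graph with nonnegative edge lengths, A a nonempty vertex subset, and p the nearest-pivot function. For all vertices u, v, if dist_G(u, p(u)) ≤ dist_G(u, v), then the estimate dist_G(u, p(u)) + dist_G(p(u), p(v)) + dist_G(p(v), v) is at least dist_G(u, v) and at most 7 · dist_G(u, v). -/
/-- nearest-pivot setup; if `d u (p u) ≤ d u v` then the pivot-based distance
estimate is between `d u v` and `7 * d u v`. -/
theorem stmt_2 {V : Type*} [Fintype V] (d : V → V → ℝ)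
    (hnonneg : ∀ u v, 0 ≤ d u v) (hrefl : ∀ u, d u u = 0)
    (hsymm : ∀ u v, d u v = d v u)
    (htri : ∀ u v w, d u w ≤ d u v + d v w)
    (A : Set V) (hA : A.Nonempty)
    (p : V → V) (hpA : ∀ v, p v ∈ A)
    (hpmin : ∀ v, ∀ a ∈ A, d v (p v) ≤ d v a)
    (u v : V) (h : d u (p u) ≤ d u v) :
    d u v ≤ d u (p u) + d (p u) (p v) + d (p v) v ∧
      d u (p u) + d (p u) (p v) + d (p v) v ≤ 7 * d u v := by
  have hvp : d v (p v) ≤ d v (p u) := hpmin v (p u) (hpA u)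
  have h1 : d v (p u) ≤ d v u + d u (p u) := htri v u (p u)
  have h2 : d (p u) (p v) ≤ d (p u) u + (d u v + d v (p v)) := by
    calc d (p u) (p v) ≤ d (p u) u + d u (p v) := htri _ _ _
      _ ≤ d (p u) u + (d u v + d v (p v)) := by linarith [htri u v (p v)]
  have h3 : d u v ≤ d u (p u) + d (p u) v := htri u (p u) v
  have h4 : d (p u) v ≤ d (p u) (p v) + d (p v) v := htri _ _ _
  have s1 := hsymm u v
  have s2 := hsymm (p u) u
  have s3 := hsymm (p v) v
  constructor <;> linarith
end

section
/- Let G be a finite graph on n ≥ 2 vertices built greedily: starting from the empty graph on n vertices, edges (u,v) are added one at a time, and an edge is only added when the current distance between u and v exceeds t (possibly infinite). Then every cycle in the resulting graph G has length at least t + 2. -/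
open SimpleGraph


/-- a graph built greedily (edge `(u,v)` added only if the current distance
between `u` and `v` exceeds `t`, or they are disconnected) has every cycle of length
at least `t + 2`. -/
theorem stmt_4 {V : Type*} [Fintype V] (hn : 2 ≤ Fintype.card V) (t m : ℕ)
    (e : Fin m → V × V)
    (G : ℕ → SimpleGraph V)
    (hG : ∀ k : ℕ, G k =
      SimpleGraph.fromEdgeSet {s | ∃ j : Fin m, (j : ℕ) < k ∧ s = s((e j).1, (e j).2)})
    (hgreedy : ∀ j : Fin m,
      ¬ (G (j : ℕ)).Reachable (e j).1 (e j).2 ∨ t < (G (j : ℕ)).dist (e j).1 (e j).2)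
    {u : V} (c : (G m).Walk u u) (hc : c.IsCycle) :
    t + 2 ≤ c.length := by
  classical
  -- every edge of c comes from some index
  have hmem : ∀ s ∈ c.edges, ∃ j : Fin m, s = s((e j).1, (e j).2) := by
    intro s hs
    have := c.edges_subset_edgeSet hs
    rw [hG m, SimpleGraph.edgeSet_fromEdgeSet] at this
    obtain ⟨⟨j, _, hj⟩, _⟩ := this
    exact ⟨j, hj⟩
  set J : Finset (Fin m) := Finset.univ.filter (fun j => s((e j).1, (e j).2) ∈ c.edges)
    with hJdef
  have hJmem : ∀ j : Fin m, j ∈ J ↔ s((e j).1, (e j).2) ∈ c.edges := by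
    intro j; simp [hJdef]
  have hJne : J.Nonempty := by
    have h3 : 3 ≤ c.length := hc.three_le_length
    have hne : c.edges ≠ [] := by
      intro h
      have := c.length_edges
      rw [h] at this
      simp at this
      omega
    obtain ⟨s, hs⟩ := List.exists_mem_of_ne_nil _ hne
    obtain ⟨j, hj⟩ := hmem s hs
    exact ⟨j, (hJmem j).mpr (hj ▸ hs)⟩
  set j := J.max' hJne with hj
  have hjJ : j ∈ J := J.max'_mem hJne
  set a := (e j).1
  set b := (e j).2
  have hab : s(a, b) ∈ c.edges := (hJmem j).mp hjJ
  -- every other edge of c lies in G j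
  have hother : ∀ s ∈ c.edges, s ≠ s(a, b) → s ∈ (G (j : ℕ)).edgeSet := by
    intro s hs hne
    have hGm := c.edges_subset_edgeSet hs
    rw [hG m, SimpleGraph.edgeSet_fromEdgeSet] at hGm
    obtain ⟨⟨j', _, hj'⟩, hdiag⟩ := hGm
    have hj'J : j' ∈ J := (hJmem j').mpr (hj' ▸ hs)
    have : j' ≠ j := by
      intro h; apply hne; rw [hj', h]
    have hle : j' ≤ j := hj ▸ J.le_max' j' hj'J
    have hlt : (j' : ℕ) < (j : ℕ) :=
      Fin.lt_iff_val_lt_val.mp (lt_of_le_of_ne hle this)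
    rw [hG (j : ℕ), SimpleGraph.edgeSet_fromEdgeSet]
    exact ⟨⟨j', hlt, hj'⟩, hdiag⟩
  -- rotate the cycle to start at a
  have ha : a ∈ c.support := SimpleGraph.Walk.fst_mem_support_of_mem_edges c hab
  set c' := c.rotate a ha with hc'
  have hc'cyc : c'.IsCycle := hc.rotate ha
  have hperm : List.Perm c'.edges c.edges := (c.rotate_edges a ha).perm
  have hab' : s(a, b) ∈ c'.edges := hperm.mem_iff.mpr hab
  have hlen' : c'.length = c.length := by
    rw [← c'.length_edges, ← c.length_edges, hperm.length_eq]
  have hb : b ∈ c'.support := SimpleGraph.Walk.snd_mem_support_of_mem_edges c' hab'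
  set p1 := c'.takeUntil b hb
  set p2 := c'.dropUntil b hb
  have hspec : p1.append p2 = c' := c'.take_spec hb
  have hedges : c'.edges = p1.edges ++ p2.edges := by
    rw [← hspec, SimpleGraph.Walk.edges_append]
  have hlensum : p1.length + p2.length = c.length := by
    rw [← hlen', ← hspec, SimpleGraph.Walk.length_append]
  have hnodup : c'.edges.Nodup := hc'cyc.edges_nodup
  rw [hedges] at hnodup
  have hdisj := List.disjoint_of_nodup_append hnodup
  -- transfer lemma
  have htrans : ∀ {x y : V} (p : (G m).Walk x y), (∀ s ∈ p.edges, s ∈ c.edges) →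
      s(a, b) ∉ p.edges → ∀ s ∈ p.edges, s ∈ (G (j : ℕ)).edgeSet := by
    intro x y p hsub hnot s hs
    exact hother s (hsub s hs) (fun h => hnot (h ▸ hs))
  have key : ∀ {x y : V} (p : (G m).Walk x y), ((e j).1 = x ∧ (e j).2 = y ∨ (e j).1 = y ∧ (e j).2 = x) →
      (∀ s ∈ p.edges, s ∈ c.edges) → s(a, b) ∉ p.edges → t < p.length := by
    intro x y p hxy hsub hnot
    have hp' := p.transfer (G (j : ℕ)) (htrans p hsub hnot)
    have hreach : (G (j : ℕ)).Reachable x y := ⟨hp'⟩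
    have hdist : (G (j : ℕ)).dist x y ≤ p.length := by
      have h := SimpleGraph.dist_le (p.transfer (G (j : ℕ)) (htrans p hsub hnot))
      rwa [SimpleGraph.Walk.length_transfer] at h
    rcases hgreedy j with h | h
    · exfalso
      rcases hxy with ⟨h1, h2⟩ | ⟨h1, h2⟩
      · exact h (h1 ▸ h2 ▸ hreach)
      · exact h (h1 ▸ h2 ▸ hreach.symm)
    · rcases hxy with ⟨h1, h2⟩ | ⟨h1, h2⟩
      · calc t < (G (j:ℕ)).dist (e j).1 (e j).2 := h
          _ ≤ p.length := by rw [h1, h2]; exact hdist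
      · calc t < (G (j:ℕ)).dist (e j).1 (e j).2 := h
          _ ≤ p.length := by rw [h1, h2, SimpleGraph.dist_comm]; exact hdist
  have hsub1 : ∀ s ∈ p1.edges, s ∈ c.edges := fun s hs =>
    hperm.mem_iff.mp (hedges ▸ List.mem_append_left _ hs)
  have hsub2 : ∀ s ∈ p2.edges, s ∈ c.edges := fun s hs =>
    hperm.mem_iff.mp (hedges ▸ List.mem_append_right _ hs)
  rw [hedges] at hab'
  rcases List.mem_append.mp hab' with h1 | h2
  · -- edge in p1, use p2 : Walk b a
    have hnot2 : s(a, b) ∉ p2.edges := fun h => hdisj h1 h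
    have ht := key p2 (Or.inr ⟨rfl, rfl⟩) hsub2 hnot2
    have hpos : 0 < p1.length := by
      have : p1.edges ≠ [] := fun h => by rw [h] at h1; exact absurd h1 List.not_mem_nil
      have := List.length_pos_iff.mpr this
      rwa [p1.length_edges] at this
    omega
  · have hnot1 : s(a, b) ∉ p1.edges := fun h => hdisj h h2
    have ht := key p1 (Or.inl ⟨rfl, rfl⟩) hsub1 hnot1
    have hpos : 0 < p2.length := by
      have : p2.edges ≠ [] := fun h => by rw [h] at h2; exact absurd h2 List.not_mem_nil
      have := List.length_pos_iff.mpr this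
      rwa [p2.length_edges] at this
    omega
end

section
/- Every simple undirected graph on n ≥ 2 vertices in which every cycle has length greater than 2·⌈log₂ n⌉ + 1 has at most 2n edges. -/
open SimpleGraph Walk

lemma isPath_concat' {V : Type*} {G : SimpleGraph V} {u v w : V} (p : G.Walk u v)
    (h : G.Adj v w) (hp : p.IsPath) (hw : w ∉ p.support) : (p.concat h).IsPath := by
  rw [← Walk.isPath_reverse_iff, Walk.reverse_concat, Walk.cons_isPath_iff]
  exact ⟨hp.reverse, by simpa using hw⟩

lemma cycle_of_two_paths {V : Type*} {G : SimpleGraph V} :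
    ∀ (N : ℕ) {a b : V} (p q : G.Walk a b), p.IsPath → q.IsPath → p ≠ q →
      p.length + q.length ≤ N →
      ∃ (u : V) (c : G.Walk u u), c.IsCycle ∧ c.length ≤ p.length + q.length := by
  intro N
  induction N with
  | zero =>
    intro a b p q hp hq hne hlen
    have hp0 : p.length = 0 := by omega
    have hq0 : q.length = 0 := by omega
    have hab : a = b := Walk.eq_of_length_eq_zero hp0
    subst hab
    rw [(Walk.isPath_iff_eq_nil (p := p)).mp hp, (Walk.isPath_iff_eq_nil (p := q)).mp hq] at hne
    exact absurd rfl hne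
  | succ N ih =>
    intro a b p q hp hq hne hlen
    classical
    by_cases hab : a = b
    · subst hab
      rw [(Walk.isPath_iff_eq_nil (p := p)).mp hp, (Walk.isPath_iff_eq_nil (p := q)).mp hq] at hne
      exact absurd rfl hne
    by_cases hshare : ∃ w, (w ∈ p.support ∧ w ∈ q.support) ∧ w ≠ a ∧ w ≠ b
    · obtain ⟨w, ⟨hwp, hwq⟩, hwa, hwb⟩ := hshare
      have hps := Walk.take_spec p hwp
      have hqs := Walk.take_spec q hwq
      have hlp : (p.takeUntil w hwp).length + (p.dropUntil w hwp).length = p.length := by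
        rw [← Walk.length_append, hps]
      have hlq : (q.takeUntil w hwq).length + (q.dropUntil w hwq).length = q.length := by
        rw [← Walk.length_append, hqs]
      have hp1 : (p.takeUntil w hwp).length ≠ 0 := fun h0 =>
        hwa (Walk.eq_of_length_eq_zero h0).symm
      have hp2 : (p.dropUntil w hwp).length ≠ 0 := fun h0 =>
        hwb (Walk.eq_of_length_eq_zero h0)
      have hq1 : (q.takeUntil w hwq).length ≠ 0 := fun h0 =>
        hwa (Walk.eq_of_length_eq_zero h0).symm
      have hq2 : (q.dropUntil w hwq).length ≠ 0 := fun h0 =>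
        hwb (Walk.eq_of_length_eq_zero h0)
      by_cases h1 : p.takeUntil w hwp = q.takeUntil w hwq
      · have h2 : p.dropUntil w hwp ≠ q.dropUntil w hwq := by
          intro h2
          apply hne
          rw [← hps, ← hqs, h1, h2]
        obtain ⟨u, c, hc, hcl⟩ := ih (p.dropUntil w hwp) (q.dropUntil w hwq)
          (hp.dropUntil hwp) (hq.dropUntil hwq) h2 (by omega)
        exact ⟨u, c, hc, by omega⟩
      · obtain ⟨u, c, hc, hcl⟩ := ih (p.takeUntil w hwp) (q.takeUntil w hwq)
          (hp.takeUntil hwp) (hq.takeUntil hwq) h1 (by omega)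
        exact ⟨u, c, hc, by omega⟩
    · -- no shared internal vertex
      push_neg at hshare
      cases p with
      | nil => exact absurd rfl hab
      | @cons _ x _ hax p' =>
        refine ⟨a, Walk.cons hax (p'.append q.reverse), ?_, ?_⟩
        · rw [Walk.cons_isCycle_iff]
          have hp' : p'.IsPath := hp.of_cons
          have hanp' : a ∉ p'.support := by
            have := hp.support_nodup
            rw [Walk.support_cons] at this
            exact this.notMem
          constructor
          · -- p'.append q.reverse is a path
            rw [Walk.isPath_def, Walk.support_append]
            rw [List.nodup_append]
            refine ⟨hp'.support_nodup, ?_, ?_⟩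
            · have := hq.reverse.support_nodup
              rw [Walk.support_eq_cons q.reverse] at this
              exact this.of_cons
            · intro z hz1 z' hz2 hzz
              subst hzz
              have hzq : z ∈ q.support := by
                have : z ∈ q.reverse.support := List.mem_of_mem_tail hz2
                rwa [Walk.support_reverse, List.mem_reverse] at this
              have hzp : z ∈ (Walk.cons hax p').support := by
                rw [Walk.support_cons]; exact List.mem_cons_of_mem _ hz1
              rcases eq_or_ne z a with rfl | hza
              · exact hanp' hz1
              · have hzb : z = b := hshare z ⟨hzp, hzq⟩ hza
                subst hzb
                -- b in tail of q.reverse.support: contradiction with nodup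
                have := hq.reverse.support_nodup
                rw [Walk.support_eq_cons q.reverse] at this
                exact this.notMem hz2
          · -- edge s(a,x) not in edges
            rw [Walk.edges_append, List.mem_append]
            rintro (he | he)
            · exact hanp' (Walk.fst_mem_support_of_mem_edges p' he)
            · rw [Walk.edges_reverse, List.mem_reverse] at he
              have hxq : x ∈ q.support := Walk.snd_mem_support_of_mem_edges q he
              have hxp : x ∈ (Walk.cons hax p').support := by
                rw [Walk.support_cons]
                exact List.mem_cons_of_mem _ p'.start_mem_support
              rcases eq_or_ne x a with rfl | hxa
              · exact hax.ne rfl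
              · have hxb : x = b := hshare x ⟨hxp, hxq⟩ hxa
                subst hxb
                -- x = b ; then p' : b → b is nil, p is the single edge a-b;
                -- and s(a,b) ∈ q.edges forces q to be the single edge
                have hp'nil : p' = Walk.nil := (Walk.isPath_iff_eq_nil (p := p')).mp hp'
                subst hp'nil
                -- q contains edge s(a,b); show q = cons hax nil
                cases q with
                | nil => exact hab rfl
                | @cons _ c _ hac q'' =>
                  rw [Walk.edges_cons, List.mem_cons] at he
                  rcases he with he | he
                  · have hcb : c = x := by
                      rcases Sym2.eq_iff.mp he with ⟨-, h'⟩ | ⟨h1, h2⟩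
                      · exact h'.symm
                      · exact absurd h2 hxa
                    subst hcb
                    have : q'' = Walk.nil :=
                      (Walk.isPath_iff_eq_nil (p := q'')).mp hq.of_cons
                    subst this
                    exact hne rfl
                  · have : a ∈ q''.support := Walk.fst_mem_support_of_mem_edges q'' he
                    have hnq := hq.support_nodup
                    rw [Walk.support_cons] at hnq
                    exact hnq.notMem this
        · simp [Walk.length_append]

open Finset in
lemma ball_growth {W : Type*} [Fintype W] [DecidableEq W] (H : SimpleGraph W)
    [DecidableRel H.Adj] (k : ℕ) (hk : 1 ≤ k) (v : W)
    (hdeg : ∀ w : W, 3 ≤ H.degree w)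
    (hg : ∀ (u : W) (c : H.Walk u u), c.IsCycle → 2 * k + 1 < c.length) :
    2 ^ k < Fintype.card W := by
  classical
  have key : ∀ {a b : W} (p q : H.Walk a b), p.IsPath → q.IsPath → p ≠ q →
      p.length + q.length ≤ 2 * k + 1 → False := by
    intro a b p q hp hq hne hlen
    obtain ⟨u, c, hc, hcl⟩ := cycle_of_two_paths (p.length + q.length) p q hp hq hne le_rfl
    exact absurd (hg u c hc) (by omega)
  set S : ℕ → Finset W := fun i => Finset.univ.filter
    (fun u => H.Reachable v u ∧ H.dist v u = i) with hS
  have memS : ∀ {i : ℕ} {u : W}, u ∈ S i ↔ H.Reachable v u ∧ H.dist v u = i := by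
    intro i u; simp [hS]
  -- claim 1 : at most one neighbour at distance ≤ i
  have claim1 : ∀ i, i + 1 ≤ k → ∀ u, H.Reachable v u → H.dist v u = i →
      ∀ w1 w2, H.Adj u w1 → H.Adj u w2 → H.dist v w1 ≤ i → H.dist v w2 ≤ i → w1 = w2 := by
    intro i hik u hur hud w1 w2 ha1 ha2 hd1 hd2
    by_contra hne12
    have hr1 : H.Reachable v w1 := hur.trans ha1.reachable
    have hr2 : H.Reachable v w2 := hur.trans ha2.reachable
    obtain ⟨P1, hP1, hl1⟩ := hr1.exists_path_of_dist
    obtain ⟨P2, hP2, hl2⟩ := hr2.exists_path_of_dist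
    have hu1 : u ∉ P1.support := by
      intro hmem
      have ht := H.dist_le (P1.takeUntil u hmem)
      have hsplit : (P1.takeUntil u hmem).length + (P1.dropUntil u hmem).length
          = P1.length := by rw [← Walk.length_append, Walk.take_spec]
      have hdrop : (P1.dropUntil u hmem).length ≠ 0 := fun h0 =>
        ha1.ne (Walk.eq_of_length_eq_zero h0)
      omega
    have hu2 : u ∉ P2.support := by
      intro hmem
      have ht := H.dist_le (P2.takeUntil u hmem)
      have hsplit : (P2.takeUntil u hmem).length + (P2.dropUntil u hmem).length
          = P2.length := by rw [← Walk.length_append, Walk.take_spec]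
      have hdrop : (P2.dropUntil u hmem).length ≠ 0 := fun h0 =>
        ha2.ne (Walk.eq_of_length_eq_zero h0)
      omega
    have hQ1 : (P1.concat ha1.symm).IsPath := isPath_concat' P1 ha1.symm hP1 hu1
    have hQ2 : (P2.concat ha2.symm).IsPath := isPath_concat' P2 ha2.symm hP2 hu2
    have hQne : P1.concat ha1.symm ≠ P2.concat ha2.symm := by
      intro hEq
      have := congrArg (fun r => (Walk.reverse r).getVert 1) hEq
      simp only [Walk.reverse_concat, Walk.getVert_cons_succ, Walk.getVert_zero] at this
      exact hne12 this
    exact key _ _ hQ1 hQ2 hQne (by rw [Walk.length_concat, Walk.length_concat]; omega)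
  -- claim 3 : vertices at distance i+1 have at most one neighbour at distance i
  have claim3 : ∀ i, i + 1 ≤ k → ∀ w, H.dist v w = i + 1 →
      ∀ u1 u2, u1 ∈ S i → u2 ∈ S i → H.Adj u1 w → H.Adj u2 w → u1 = u2 := by
    intro i hik w hdw u1 u2 hu1 hu2 ha1 ha2
    by_contra hne12
    obtain ⟨hr1, hd1⟩ := memS.mp hu1
    obtain ⟨hr2, hd2⟩ := memS.mp hu2
    obtain ⟨P1, hP1, hl1⟩ := hr1.exists_path_of_dist
    obtain ⟨P2, hP2, hl2⟩ := hr2.exists_path_of_dist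
    have hw1 : w ∉ P1.support := by
      intro hmem
      have ht := H.dist_le (P1.takeUntil w hmem)
      have htl := Walk.length_takeUntil_le P1 hmem
      omega
    have hw2 : w ∉ P2.support := by
      intro hmem
      have ht := H.dist_le (P2.takeUntil w hmem)
      have htl := Walk.length_takeUntil_le P2 hmem
      omega
    have hQ1 : (P1.concat ha1).IsPath := isPath_concat' P1 ha1 hP1 hw1
    have hQ2 : (P2.concat ha2).IsPath := isPath_concat' P2 ha2 hP2 hw2
    have hQne : P1.concat ha1 ≠ P2.concat ha2 := by
      intro hEq
      have := congrArg (fun r => (Walk.reverse r).getVert 1) hEq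
      simp only [Walk.reverse_concat, Walk.getVert_cons_succ, Walk.getVert_zero] at this
      exact hne12 this
    exact key _ _ hQ1 hQ2 hQne (by rw [Walk.length_concat, Walk.length_concat]; omega)
  -- claim 2 : each vertex at distance i has ≥ 2 neighbours at distance i+1
  have claim2 : ∀ i, i + 1 ≤ k → ∀ u ∈ S i,
      2 ≤ ((S (i + 1)).filter (fun w => H.Adj u w)).card := by
    intro i hik u hu
    obtain ⟨hur, hud⟩ := memS.mp hu
    have hlow : ((H.neighborFinset u).filter (fun w => H.dist v w ≤ i)).card ≤ 1 := by
      rw [Finset.card_le_one]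
      intro w1 h1 w2 h2
      rw [Finset.mem_filter, SimpleGraph.mem_neighborFinset] at h1 h2
      exact claim1 i hik u hur hud w1 w2 h1.1 h2.1 h1.2 h2.2
    have hsplit := Finset.card_filter_add_card_filter_not
      (s := H.neighborFinset u) (p := fun w => H.dist v w ≤ i)
    have hsub : (H.neighborFinset u).filter (fun w => ¬ H.dist v w ≤ i) ⊆
        (S (i + 1)).filter (fun w => H.Adj u w) := by
      intro w hw
      rw [Finset.mem_filter, SimpleGraph.mem_neighborFinset] at hw
      obtain ⟨hadj, hgt⟩ := hw
      have hrw : H.Reachable v w := hur.trans hadj.reachable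
      obtain ⟨P, hP, hl⟩ := hur.exists_path_of_dist
      have hle : H.dist v w ≤ i + 1 := by
        have := H.dist_le (P.concat hadj)
        rw [Walk.length_concat] at this
        omega
      rw [Finset.mem_filter]
      exact ⟨memS.mpr ⟨hrw, by omega⟩, hadj⟩
    have hdegu := hdeg u
    have hdd : (H.neighborFinset u).card = H.degree u := rfl
    have := Finset.card_le_card hsub
    omega
  -- growth step
  have growth : ∀ i, i + 1 ≤ k → 2 * (S i).card ≤ (S (i + 1)).card := by
    intro i hik
    have hdc := Finset.card_mul_le_card_mul (s := S i) (t := S (i + 1))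
      (fun u w => H.Adj u w) (m := 2) (n := 1)
      (by
        intro u hu
        have := claim2 i hik u hu
        rwa [Finset.bipartiteAbove])
      (by
        intro w hw
        rw [Finset.bipartiteBelow, Finset.card_le_one]
        intro u1 h1 u2 h2
        rw [Finset.mem_filter] at h1 h2
        obtain ⟨hrw, hdw⟩ := memS.mp hw
        exact claim3 i hik w hdw u1 u2 h1.1 h2.1 h1.2 h2.2)
    omega
  -- base : S 1 has at least 3 elements
  have base : 3 ≤ (S 1).card := by
    have hsub : H.neighborFinset v ⊆ S 1 := by
      intro w hw
      rw [SimpleGraph.mem_neighborFinset] at hw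
      have hr : H.Reachable v w := hw.reachable
      have hle : H.dist v w ≤ 1 := by
        have := H.dist_le (Walk.cons hw Walk.nil)
        simpa using this
      have hne0 : H.dist v w ≠ 0 :=
        SimpleGraph.dist_ne_zero_iff_ne_and_reachable.mpr ⟨hw.ne, hr⟩
      exact memS.mpr ⟨hr, by omega⟩
    have := Finset.card_le_card hsub
    have := hdeg v
    have hdd : (H.neighborFinset v).card = H.degree v := rfl
    omega
  -- iterate
  have pow : ∀ j, j + 1 ≤ k → 3 * 2 ^ j ≤ (S (j + 1)).card := by
    intro j
    induction j with
    | zero => intro _; simpa using base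
    | succ j ih =>
      intro hjk
      have h1 := ih (by omega)
      have h2 := growth (j + 1) (by omega)
      have : 3 * 2 ^ (j + 1) = 2 * (3 * 2 ^ j) := by ring
      omega
  have hfin : (S k).card ≤ Fintype.card W := by
    rw [← Finset.card_univ]
    exact Finset.card_le_card (Finset.filter_subset _ _)
  have hpk := pow (k - 1) (by omega)
  have hk1 : k - 1 + 1 = k := by omega
  rw [hk1] at hpk
  have h2k : 2 ^ k = 2 * 2 ^ (k - 1) := by
    conv_lhs => rw [← hk1]
    ring
  have hone : 1 ≤ 2 ^ (k - 1) := Nat.one_le_two_pow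
  omega
open SimpleGraph Finset

lemma internal_step {V : Type*} [Fintype V] [DecidableEq V] (G : SimpleGraph V)
    [DecidableRel G.Adj] (s : Finset V) (x : V) :
    (G.edgeFinset ∩ s.sym2).card ≤
      (G.edgeFinset ∩ (s.erase x).sym2).card + (s.filter (G.Adj x)).card := by
  classical
  have h1 := Finset.card_le_card_sdiff_add_card
    (s := G.edgeFinset ∩ s.sym2) (t := G.edgeFinset ∩ (s.erase x).sym2)
  have h2 : (G.edgeFinset ∩ s.sym2) \ (G.edgeFinset ∩ (s.erase x).sym2) ⊆
      (s.filter (G.Adj x)).image (fun y => s(x, y)) := by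
    intro e he
    rw [Finset.mem_sdiff] at he
    obtain ⟨he1, he2⟩ := he
    induction e using Sym2.ind with
    | _ a b =>
      have he1' := he1
      rw [Finset.mem_inter, SimpleGraph.mem_edgeFinset, SimpleGraph.mem_edgeSet,
        Finset.mk_mem_sym2_iff] at he1'
      obtain ⟨hadj, ha, hb⟩ := he1'
      have hx : a = x ∨ b = x := by
        by_contra hcon
        push_neg at hcon
        refine he2 ?_
        rw [Finset.mem_inter, SimpleGraph.mem_edgeFinset, SimpleGraph.mem_edgeSet,
          Finset.mk_mem_sym2_iff]
        exact ⟨hadj, Finset.mem_erase.mpr ⟨hcon.1, ha⟩, Finset.mem_erase.mpr ⟨hcon.2, hb⟩⟩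
      rw [Finset.mem_image]
      rcases hx with rfl | rfl
      · exact ⟨b, Finset.mem_filter.mpr ⟨hb, hadj⟩, rfl⟩
      · exact ⟨a, Finset.mem_filter.mpr ⟨ha, hadj.symm⟩, Sym2.eq_swap⟩
  calc (G.edgeFinset ∩ s.sym2).card
      ≤ _ + (G.edgeFinset ∩ (s.erase x).sym2).card := h1
    _ ≤ ((s.filter (G.Adj x)).image (fun y => s(x, y))).card
          + (G.edgeFinset ∩ (s.erase x).sym2).card := by
        exact Nat.add_le_add_right (Finset.card_le_card h2) _
    _ ≤ _ := by
        rw [Nat.add_comm]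
        exact Nat.add_le_add_left Finset.card_image_le _

lemma exists_good_subset {V : Type*} [Fintype V] [DecidableEq V] (G : SimpleGraph V)
    [DecidableRel G.Adj] :
    ∀ (n : ℕ) (s : Finset V), s.card ≤ n →
      2 * s.card < (G.edgeFinset ∩ s.sym2).card →
      ∃ t : Finset V, t.Nonempty ∧ ∀ x ∈ t, 3 ≤ (t.filter (G.Adj x)).card := by
  intro n
  induction n with
  | zero =>
    intro s hs hlt
    have : s = ∅ := Finset.card_eq_zero.mp (Nat.le_zero.mp hs)
    subst this
    rw [Finset.sym2_empty, Finset.inter_empty] at hlt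
    simp at hlt
  | succ n ih =>
    intro s hs hlt
    by_cases hall : ∀ x ∈ s, 3 ≤ (s.filter (G.Adj x)).card
    · refine ⟨s, ?_, hall⟩
      rw [Finset.nonempty_iff_ne_empty]
      rintro rfl
      rw [Finset.sym2_empty, Finset.inter_empty] at hlt
      simp at hlt
    · push_neg at hall
      obtain ⟨x, hx, hxd⟩ := hall
      have hstep := internal_step G s x
      have hcard : (s.erase x).card = s.card - 1 := Finset.card_erase_of_mem hx
      have hpos : 1 ≤ s.card := Finset.card_pos.mpr ⟨x, hx⟩
      exact ih (s.erase x) (by omega) (by omega)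

/-- a simple graph on `n ≥ 2` vertices in which every cycle has length
greater than `2⌈log₂ n⌉ + 1` has at most `2n` edges. -/
theorem stmt_5 {V : Type*} [Fintype V] [DecidableEq V] (G : SimpleGraph V)
    [DecidableRel G.Adj]
    (hn : 2 ≤ Fintype.card V)
    (hgirth : ∀ (u : V) (c : G.Walk u u), c.IsCycle →
      2 * Nat.clog 2 (Fintype.card V) + 1 < c.length) :
    G.edgeFinset.card ≤ 2 * Fintype.card V := by
  classical
  by_contra hcon
  push_neg at hcon
  have hinter : G.edgeFinset ∩ (Finset.univ : Finset V).sym2 = G.edgeFinset :=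
    Finset.inter_eq_left.mpr
      (fun e he => Finset.mem_sym2_iff.mpr (fun a _ => Finset.mem_univ a))
  obtain ⟨t, htne, htdeg⟩ := exists_good_subset G (Fintype.card V) Finset.univ
    (le_of_eq Finset.card_univ) (by rw [hinter, Finset.card_univ]; omega)
  set k := Nat.clog 2 (Fintype.card V) with hkdef
  have hk1 : 1 ≤ k := Nat.clog_pos one_lt_two hn
  let H : SimpleGraph {x // x ∈ t} := G.comap (fun x => (x : V))
  haveI : DecidableRel H.Adj := fun a b => ‹DecidableRel G.Adj› _ _
  have hdeg : ∀ w : {x // x ∈ t}, 3 ≤ H.degree w := by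
    intro w
    have h3 := htdeg w.1 w.2
    have hcardeq : H.degree w = (t.filter (G.Adj (w : V))).card := by
      rw [SimpleGraph.degree, SimpleGraph.neighborFinset_eq_filter]
      apply Finset.card_bij (fun (x : {x // x ∈ t}) _ => (x : V))
      · intro a ha; rw [Finset.mem_filter] at ha ⊢; exact ⟨a.2, ha.2⟩
      · intro a _ b _ h; exact Subtype.ext h
      · intro y hy
        rw [Finset.mem_filter] at hy
        exact ⟨⟨y, hy.1⟩, Finset.mem_filter.mpr ⟨Finset.mem_univ _, hy.2⟩, rfl⟩
    omega
  have hgH : ∀ (u) (c : H.Walk u u), c.IsCycle → 2 * k + 1 < c.length := by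
    intro u c hc
    have hinj : Function.Injective (fun x : {x // x ∈ t} => (x : V)) :=
      Subtype.val_injective
    have := hgirth (u : V)
      ((c.map (SimpleGraph.Hom.comap (fun x : {x // x ∈ t} => (x : V)) G)))
      (hc.map hinj)
    erw [Walk.length_map] at this; exact this
  haveI : Nonempty {x // x ∈ t} := ⟨⟨htne.choose, htne.choose_spec⟩⟩
  have hbig := ball_growth H k hk1 (Classical.arbitrary _) hdeg hgH
  have hcard : Fintype.card {x // x ∈ t} = t.card := Fintype.card_coe t
  have hle : t.card ≤ Fintype.card V := Finset.card_le_univ t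
  have hpow : Fintype.card V ≤ 2 ^ k := Nat.le_pow_clog one_lt_two _
  omega
end
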